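/- arXiv:0804.0120 — 3 statements merged into one kernel-verified Lean document; each statement's English description precedes it below -/
import Mathlib

section
/- Let ξ = (1, a_1/q, ..., a_n/q) with q ≥ 1 and gcd(q, a_1, ..., a_n) = 1, and let μ_2(ξ,N) be the second successive minimum of the cylinder C_ξ(N, N^{-1/n}) with respect to Z^{n+1}. Then μ_2(ξ,N) ≥ N^{1/n}/q for all N ≥ 1. -/
open scoped Pointwise
open MeasureTheory Filter

noncomputable section

/-- `z ∈ ℝ^m` is an integer point. -/
def IsIntPoint {m : ℕ} (z : EuclideanSpace ℝ (Fin m)) : Prop := ∀ j, ∃ a : ℤ, z j = a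

/-- The cylinder `C_ξ(Q,σ) ⊂ ℝ^{n+1}`. -/
def cyl (n : ℕ) (ξ : Fin n → ℝ) (Q σ : ℝ) : Set (EuclideanSpace ℝ (Fin (n+1))) :=
  {z | |z 0| < Q ∧ Real.sqrt (∑ j, (z j.succ - ξ j * z 0) ^ 2) < σ}

/-- The `l`-th successive minimum of a body `C` with respect to `ℤ^{n+1}`. -/
def succMin (n l : ℕ) (C : Set (EuclideanSpace ℝ (Fin (n+1)))) : ℝ :=
  sInf {t : ℝ | 0 < t ∧ ∃ v : Fin l → EuclideanSpace ℝ (Fin (n+1)),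
    LinearIndependent ℝ v ∧ ∀ i, IsIntPoint (v i) ∧ v i ∈ t • C}

/-- `μ_l(ξ, N)`: successive minima of `ℤ^{n+1}` w.r.t. `C_ξ(N, N^{-1/n})`. -/
def mu (n l : ℕ) (ξ : Fin n → ℝ) (N : ℝ) : ℝ :=
  succMin n l (cyl n ξ N (N ^ (-1 / (n : ℝ))))

/-- The vector `(1, ξ_1, ..., ξ_n) ∈ ℝ^{n+1}`. -/
def embed (n : ℕ) (ξ : Fin n → ℝ) : EuclideanSpace ℝ (Fin (n+1)) :=
  WithLp.toLp 2 (Fin.cons 1 ξ : Fin (n+1) → ℝ)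

/-- `w_m`: the volume of the unit ball in `ℝ^m`. -/
def ballVol (m : ℕ) : ℝ := (volume (Metric.ball (0 : EuclideanSpace ℝ (Fin m)) 1)).toReal

/-- The `l`-dimensional fundamental volume of the lattice spanned by `b`. -/
def gramVol {m l : ℕ} (b : Fin l → EuclideanSpace ℝ (Fin m)) : ℝ :=
  Real.sqrt (Matrix.det (Matrix.of fun i j => (@inner ℝ _ _ (b i) (b j))))

/-- The lattice spanned by `b` is complete: it contains all integer points of its real span. -/
def IsCompleteLat {n l : ℕ} (b : Fin l → EuclideanSpace ℝ (Fin (n+1))) : Prop :=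
  ∀ z : EuclideanSpace ℝ (Fin (n+1)), IsIntPoint z →
    z ∈ Submodule.span ℝ (Set.range b) → z ∈ Submodule.span ℤ (Set.range b)

/-- `ξ` is `(L, γ, W)`-badly approximable for an `l`-dimensional lattice `L`:
for every `Q ≥ W` the cylinder `C_ξ(Q, γ Q^{-1/(l-1)})` has no nonzero point of `L`. -/
def IsBad (n l : ℕ) (L : Submodule ℤ (EuclideanSpace ℝ (Fin (n+1)))) (ξ : Fin n → ℝ)
    (γ W : ℝ) : Prop :=
  ∀ Q : ℝ, W ≤ Q → ∀ z ∈ L, z ≠ 0 → z ∉ cyl n ξ Q (γ * Q ^ (-1 / ((l : ℝ) - 1)))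

lemma mem_smul_cyl {n : ℕ} {ξ : Fin n → ℝ} {Q σ t : ℝ} (ht : 0 < t)
    (z : EuclideanSpace ℝ (Fin (n+1))) :
    z ∈ t • cyl n ξ Q σ ↔ |z 0| < t * Q ∧
      Real.sqrt (∑ j, (z j.succ - ξ j * z 0) ^ 2) < t * σ := by
  rw [Set.mem_smul_set_iff_inv_smul_mem₀ ht.ne']
  have hz : ∀ i : Fin (n+1), (t⁻¹ • z) i = t⁻¹ * z i := fun i => rfl
  have hinv : 0 < t⁻¹ := inv_pos.mpr ht
  have hs : ∑ j, ((t⁻¹ • z) j.succ - ξ j * (t⁻¹ • z) 0) ^ 2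
      = t⁻¹ ^ 2 * ∑ j, (z j.succ - ξ j * z 0) ^ 2 := by
    rw [Finset.mul_sum]; exact Finset.sum_congr rfl fun j _ => by rw [hz, hz]; ring
  constructor
  · rintro ⟨h1, h2⟩
    rw [hz, abs_mul, abs_of_pos hinv, inv_mul_lt_iff₀ ht] at h1
    rw [hs, Real.sqrt_mul (sq_nonneg _), Real.sqrt_sq hinv.le, inv_mul_lt_iff₀ ht] at h2
    exact ⟨h1, h2⟩
  · rintro ⟨h1, h2⟩
    constructor
    · rw [hz, abs_mul, abs_of_pos hinv, inv_mul_lt_iff₀ ht]; exact h1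
    · rw [hs, Real.sqrt_mul (sq_nonneg _), Real.sqrt_sq hinv.le, inv_mul_lt_iff₀ ht]
      exact h2

set_option maxHeartbeats 1000000 in
theorem mu_two_rational (n : ℕ) (hn : 0 < n) (q : ℕ) (hq : 1 ≤ q) (a : Fin n → ℤ)
    (hgcd : Int.gcd (q : ℤ) (Finset.univ.gcd a) = 1) (N : ℝ) (hN : 1 ≤ N) :
    N ^ ((1 : ℝ) / (n : ℝ)) / (q : ℝ) ≤ mu n 2 (fun j => (a j : ℝ) / (q : ℝ)) N := by
  haveI : NeZero n := ⟨hn.ne'⟩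
  set ξ : Fin n → ℝ := fun j => (a j : ℝ) / (q : ℝ) with hξ
  have hN0 : (0 : ℝ) < N := lt_of_lt_of_le one_pos hN
  have hq0 : (0 : ℝ) < (q : ℝ) := by exact_mod_cast hq
  set σ : ℝ := N ^ (-1 / (n : ℝ)) with hσ
  have hσ0 : 0 < σ := Real.rpow_pos_of_pos hN0 _
  have hpow0 : 0 < N ^ ((1 : ℝ) / (n : ℝ)) := Real.rpow_pos_of_pos hN0 _
  have hmul : N ^ ((1 : ℝ) / (n : ℝ)) * σ = 1 := by
    rw [hσ, ← Real.rpow_add hN0]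
    rw [show (1 : ℝ) / (n : ℝ) + -1 / (n : ℝ) = 0 by ring, Real.rpow_zero]
  set c : ℝ := N ^ ((1 : ℝ) / (n : ℝ)) / (q : ℝ) with hc
  have hc0 : 0 < c := div_pos hpow0 hq0
  have hcσ : c * σ = 1 / (q : ℝ) := by
    rw [hc, div_mul_eq_mul_div, hmul]
  -- the integer point (q, a₁, ..., aₙ)
  set w : EuclideanSpace ℝ (Fin (n+1)) :=
    WithLp.toLp 2 (fun i => (((Fin.cons (q : ℤ) a : Fin (n+1) → ℤ) i : ℤ) : ℝ)) with hw
  have hw0 : w 0 = (q : ℝ) := by simp [hw]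
  have hwsucc : ∀ j : Fin n, w j.succ = (a j : ℝ) := fun j => by simp [hw]
  rw [mu, succMin]
  apply le_csInf
  · -- nonemptiness
    set t : ℝ := (q : ℝ) + N ^ ((1 : ℝ) / (n : ℝ)) + 1 with htdef
    have ht0 : 0 < t := by positivity
    set j0 : Fin n := ⟨0, hn⟩ with hj0
    set u : EuclideanSpace ℝ (Fin (n+1)) :=
      WithLp.toLp 2 (fun i => if i = j0.succ then (1 : ℝ) else 0) with hu
    have hu0 : u 0 = 0 := by
      simp only [hu, PiLp.toLp_apply]
      rw [if_neg (Fin.succ_ne_zero j0).symm]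
    have husucc : ∀ j : Fin n, u j.succ = if j = j0 then (1 : ℝ) else 0 := by
      intro j
      simp only [hu, PiLp.toLp_apply, Fin.succ_inj]
    have huj0 : u j0.succ = 1 := by rw [husucc, if_pos rfl]
    have hune : u ≠ 0 := by
      intro h
      have := congrArg (fun x => x j0.succ) h
      rw [huj0] at this
      exact one_ne_zero this
    refine ⟨t, ht0, ![w, u], ?_, ?_⟩
    · rw [linearIndependent_fin2]
      refine ⟨by simpa using hune, fun s hs => ?_⟩
      have := congrArg (fun x => x 0) hs
      simp only [Matrix.cons_val_one, Matrix.head_cons, Matrix.cons_val_zero] at this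
      have h0 : (s • u) 0 = s * u 0 := rfl
      rw [h0, hu0, mul_zero] at this
      rw [hw0] at this
      exact hq0.ne' this.symm
    · intro i
      fin_cases i
      · show IsIntPoint w ∧ w ∈ t • cyl n ξ N (N ^ (-1 / (n : ℝ)))
        refine ⟨fun k => ⟨(Fin.cons (q : ℤ) a : Fin (n+1) → ℤ) k, by simp [hw]⟩, ?_⟩
        rw [mem_smul_cyl ht0]
        constructor
        · rw [hw0, abs_of_pos hq0]
          have h1 : t ≤ t * N := le_mul_of_one_le_right ht0.le hN
          have h2 : (q : ℝ) < t := by rw [htdef]; linarith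
          linarith
        · have hsum : ∑ j, (w j.succ - ξ j * w 0) ^ 2 = 0 := by
            apply Finset.sum_eq_zero
            intro j _
            rw [hwsucc, hw0, hξ]
            have : (a j : ℝ) - (a j : ℝ) / (q : ℝ) * (q : ℝ) = 0 := by
              field_simp
              ring
            simp only [this]
            ring
          rw [hsum, Real.sqrt_zero]
          positivity
      · show IsIntPoint u ∧ u ∈ t • cyl n ξ N (N ^ (-1 / (n : ℝ)))
        refine ⟨fun k => ⟨if k = j0.succ then 1 else 0, by simp [hu]⟩, ?_⟩
        rw [mem_smul_cyl ht0]
        constructor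
        · rw [hu0, abs_zero]
          positivity
        · have hsum : ∑ j, (u j.succ - ξ j * u 0) ^ 2 = 1 := by
            have : ∀ j : Fin n, (u j.succ - ξ j * u 0) ^ 2 = if j = j0 then 1 else 0 := by
              intro j
              rw [husucc, hu0, mul_zero, sub_zero]
              split <;> norm_num
            rw [Finset.sum_congr rfl fun j _ => this j]
            simp
          rw [hsum, Real.sqrt_one]
          have : N ^ ((1 : ℝ) / (n : ℝ)) * σ < t * σ := by
            apply mul_lt_mul_of_pos_right _ hσ0
            rw [htdef]; nlinarith
          rw [hmul] at this
          exact this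
  · -- lower bound
    rintro t ⟨ht0, v, hv, hvi⟩
    by_contra hlt
    push_neg at hlt
    -- each v i is a real multiple of w
    have key : ∀ i : Fin 2, (q : ℝ) • v i = (v i 0) • w := by
      intro i
      obtain ⟨hint, hmem⟩ := hvi i
      rw [mem_smul_cyl ht0] at hmem
      obtain ⟨-, h2⟩ := hmem
      have h2' : Real.sqrt (∑ j, (v i j.succ - ξ j * v i 0) ^ 2) < 1 / (q : ℝ) := by
        calc Real.sqrt _ < t * σ := h2
        _ ≤ c * σ := by nlinarith [hσ0]
        _ = 1 / (q : ℝ) := hcσ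
      have hco : ∀ j : Fin n, v i j.succ = ξ j * v i 0 := by
        intro j
        have hle : |v i j.succ - ξ j * v i 0| ≤
            Real.sqrt (∑ j', (v i j'.succ - ξ j' * v i 0) ^ 2) := by
          rw [← Real.sqrt_sq_eq_abs]
          apply Real.sqrt_le_sqrt
          exact Finset.single_le_sum (f := fun j' => (v i j'.succ - ξ j' * v i 0) ^ 2)
            (fun j' _ => sq_nonneg _) (Finset.mem_univ j)
        have habs : |v i j.succ - ξ j * v i 0| < 1 / (q : ℝ) := lt_of_le_of_lt hle h2'
        obtain ⟨b, hb⟩ := hint j.succ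
        obtain ⟨b0, hb0⟩ := hint 0
        have hval : v i j.succ - ξ j * v i 0 = ((q * b - a j * b0 : ℤ) : ℝ) / (q : ℝ) := by
          rw [hb, hb0, hξ]
          push_cast
          field_simp
        rw [hval, abs_div, abs_of_pos hq0, div_lt_div_iff₀ hq0 hq0, one_mul] at habs
        have h1 : |((q * b - a j * b0 : ℤ) : ℝ)| < 1 := by nlinarith
        rw [← Int.cast_abs] at h1
        have h1' : |(q * b - a j * b0 : ℤ)| < 1 := by exact_mod_cast h1
        have hzz : (q : ℤ) * b - a j * b0 = 0 := by
          have := abs_lt.mp h1'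
          omega
        have hcast : (q : ℝ) * b = a j * b0 := by exact_mod_cast sub_eq_zero.mp hzz
        rw [hb, hb0, hξ]
        field_simp
        linarith [hcast]
      ext k
      rcases Fin.eq_zero_or_eq_succ k with hk | ⟨j, hk⟩
      · subst hk; show (q : ℝ) * v i 0 = v i 0 * w 0; rw [hw0]; ring
      · subst hk
        show (q : ℝ) * v i j.succ = v i 0 * w j.succ
        rw [hwsucc, hco j, hξ]
        field_simp
    -- contradiction with linear independence
    have hveq : (v 1 0) • v 0 = (v 0 0) • v 1 := by
      have h1 := key 0
      have h2 := key 1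
      have : (q : ℝ) • ((v 1 0) • v 0) = (q : ℝ) • ((v 0 0) • v 1) := by
        rw [smul_comm (q : ℝ) (v 1 0), smul_comm (q : ℝ) (v 0 0), h1, h2, smul_comm]
      exact smul_right_injective _ hq0.ne' this
    have hv00 : v 0 0 ≠ 0 := by
      intro h
      have h1 := key 0
      rw [h, zero_smul] at h1
      rcases smul_eq_zero.mp h1 with h' | h'
      · exact hq0.ne' h'
      · exact hv.ne_zero 0 h'
    have hsum2 : (v 1 0) • v 0 + (-(v 0 0)) • v 1 = 0 := by
      rw [neg_smul, ← sub_eq_add_neg, sub_eq_zero]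
      exact hveq
    have hcoef := Fintype.linearIndependent_iff.mp hv ![v 1 0, -(v 0 0)]
      (by rw [Fin.sum_univ_two]; simpa using hsum2) 1
    simp at hcoef
    exact hv00 hcoef
end
end

section
/- Let Γ be a two-dimensional complete sublattice of Z^{n+1}, let ρ > 0 be the Euclidean distance between span(Γ) and Z^{n+1} \ Γ, and suppose ξ = (1,ξ_1,...,ξ_n) ∈ span(Γ). Then for any positive N, the third successive minimum satisfies μ_3(ξ,N) ≥ N^{1/n} · ρ. -/
open scoped Pointwise
open MeasureTheory Filter

noncomputable section

theorem mu_three_lower_two_dim (n : ℕ) (hn : 0 < n)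
    (b : Fin 2 → EuclideanSpace ℝ (Fin (n+1))) (hbint : ∀ i, IsIntPoint (b i))
    (hbli : LinearIndependent ℝ b) (hbcomp : IsCompleteLat b)
    (ξ : Fin n → ℝ) (hξ : embed n ξ ∈ Submodule.span ℝ (Set.range b))
    (ρ : ℝ) (hρ : ρ = sInf {d : ℝ | ∃ z : EuclideanSpace ℝ (Fin (n+1)), IsIntPoint z ∧
      z ∉ Submodule.span ℤ (Set.range b) ∧
      d = Metric.infDist z (Submodule.span ℝ (Set.range b) : Set _)}) (hρpos : 0 < ρ)
    (N : ℝ) (hN : 0 < N) :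
    N ^ ((1 : ℝ) / (n : ℝ)) * ρ ≤ mu n 3 ξ N := by
  have hspanRZ : ∀ z : EuclideanSpace ℝ (Fin (n+1)), z ∈ Submodule.span ℤ (Set.range b) →
      z ∈ Submodule.span ℝ (Set.range b) := by
    intro z hz
    have h : Submodule.span ℤ (Set.range b) ≤
        (Submodule.span ℝ (Set.range b)).restrictScalars ℤ :=
      Submodule.span_le.mpr Submodule.subset_span
    exact h hz
  -- dispose of the case n = 1
  rcases lt_or_ge n 2 with hn2 | hn2
  · exfalso
    interval_cases n
    have htop : Submodule.span ℝ (Set.range b) = ⊤ := by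
      apply hbli.span_eq_top_of_card_eq_finrank
      simp [finrank_euclideanSpace_fin]
    have hempty : {d : ℝ | ∃ z : EuclideanSpace ℝ (Fin (1+1)), IsIntPoint z ∧
        z ∉ Submodule.span ℤ (Set.range b) ∧
        d = Metric.infDist z (Submodule.span ℝ (Set.range b) : Set _)} = ∅ := by
      ext d
      simp only [Set.mem_setOf_eq, Set.mem_empty_iff_false, iff_false]
      rintro ⟨z, hzint, hznot, -⟩
      exact hznot (hbcomp z hzint (by rw [htop]; trivial))
    rw [hempty, Real.sInf_empty] at hρ
    exact absurd hρ (by linarith)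
  -- main case: n ≥ 2
  have hNpow_pos : (0:ℝ) < N ^ (-1 / (n : ℝ)) := Real.rpow_pos_of_pos hN _
  have hNpow_pos' : (0:ℝ) < N ^ ((1:ℝ) / (n : ℝ)) := Real.rpow_pos_of_pos hN _
  have hpowmul : N ^ ((1:ℝ) / (n : ℝ)) * N ^ (-1 / (n : ℝ)) = 1 := by
    rw [← Real.rpow_add hN, show (1:ℝ)/(n:ℝ) + -1/(n:ℝ) = 0 by ring, Real.rpow_zero]
  -- pull a scalar out of the sqrt-sum
  have key : ∀ (c : ℝ) (z : EuclideanSpace ℝ (Fin (n+1))),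
      Real.sqrt (∑ j, ((c • z) j.succ - ξ j * (c • z) 0) ^ 2)
        = |c| * Real.sqrt (∑ j, (z j.succ - ξ j * z 0) ^ 2) := by
    intro c z
    have h1 : ∀ j : Fin n, ((c • z) j.succ - ξ j * (c • z) 0) ^ 2
        = c ^ 2 * (z j.succ - ξ j * z 0) ^ 2 := by
      intro j
      rw [PiLp.smul_apply, PiLp.smul_apply, smul_eq_mul, smul_eq_mul]; ring
    rw [Finset.sum_congr rfl (fun j _ => h1 j), ← Finset.mul_sum,
      Real.sqrt_mul (sq_nonneg c), Real.sqrt_sq_eq_abs]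
  rw [mu, succMin]
  apply le_csInf
  · -- nonemptiness: three scaled basis vectors
    have h3 : 3 ≤ n + 1 := by omega
    set v : Fin 3 → EuclideanSpace ℝ (Fin (n+1)) :=
      fun i => EuclideanSpace.single (Fin.castLE h3 i) (1:ℝ) with hv
    have hvli : LinearIndependent ℝ v := by
      have := (EuclideanSpace.basisFun (Fin (n+1)) ℝ).toBasis.linearIndependent
      have h2 := this.comp (Fin.castLE h3) (Fin.castLE_injective h3)
      convert h2 using 1
      funext i
      simp [hv, EuclideanSpace.basisFun_apply]
      all_goals rfl
    set S : Fin 3 → ℝ :=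
      fun i => Real.sqrt (∑ j, ((v i) j.succ - ξ j * (v i) 0) ^ 2) with hS
    have hSnn : ∀ i, 0 ≤ S i := fun i => Real.sqrt_nonneg _
    set t : ℝ := 1/N + (S 0 + S 1 + S 2) * N ^ ((1:ℝ)/(n:ℝ)) + 1 with ht
    have hX : 0 ≤ (S 0 + S 1 + S 2) * N ^ ((1:ℝ)/(n:ℝ)) :=
      mul_nonneg (by positivity) (le_of_lt hNpow_pos')
    have h1N : (0:ℝ) < 1/N := by positivity
    have htpos : 0 < t := by rw [ht]; linarith
    refine ⟨t, htpos, v, hvli, fun i => ⟨?_, ?_⟩⟩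
    · intro j
      by_cases hji : j = Fin.castLE h3 i
      · exact ⟨1, by simp [hv, hji]⟩
      · exact ⟨0, by simp [hv, EuclideanSpace.single_apply, hji]⟩
    · rw [Set.mem_smul_set_iff_inv_smul_mem₀ (ne_of_gt htpos)]
      constructor
      · have h1 : |(t⁻¹ • v i) 0| = t⁻¹ * |(v i) 0| := by
          have : (t⁻¹ • v i) 0 = t⁻¹ * (v i) 0 := rfl
          rw [this, abs_mul, abs_of_pos (by positivity)]
        rw [h1]
        have hb : |(v i) 0| ≤ 1 := by
          rw [hv]
          simp only [EuclideanSpace.single_apply]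
          split <;> simp
        have htN : 1 < t * N := by
          rw [ht]
          have h1' : (1/N) * N = 1 := by field_simp
          nlinarith [hX, hN, mul_nonneg hX hN.le]
        calc t⁻¹ * |(v i) 0| ≤ t⁻¹ * 1 := by
              apply mul_le_mul_of_nonneg_left hb (by positivity)
          _ < N := by
              rw [mul_one, inv_lt_iff_one_lt_mul₀ htpos]
              linarith [htN]
      · show Real.sqrt (∑ j, ((t⁻¹ • v i) j.succ - ξ j * (t⁻¹ • v i) 0) ^ 2) < N ^ (-1/(n:ℝ))
        rw [key, abs_of_pos (by positivity : (0:ℝ) < t⁻¹)]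
        have hSi : S i ≤ S 0 + S 1 + S 2 := by
          have h := Finset.single_le_sum (f := S) (fun k _ => hSnn k) (Finset.mem_univ i)
          rwa [Fin.sum_univ_three] at h
        have ht' : S i * N ^ ((1:ℝ)/(n:ℝ)) < t := by
          have hm := mul_le_mul_of_nonneg_right hSi (le_of_lt hNpow_pos')
          rw [ht]; linarith
        have : S i < t * N ^ (-1/(n:ℝ)) := by
          have := mul_lt_mul_of_pos_right ht' hNpow_pos
          calc S i = S i * (N ^ ((1:ℝ)/(n:ℝ)) * N ^ (-1/(n:ℝ))) := by
                rw [hpowmul, mul_one]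
            _ = S i * N ^ ((1:ℝ)/(n:ℝ)) * N ^ (-1/(n:ℝ)) := by ring
            _ < t * N ^ (-1/(n:ℝ)) := this
        calc t⁻¹ * S i < t⁻¹ * (t * N ^ (-1/(n:ℝ))) :=
              mul_lt_mul_of_pos_left this (by positivity)
          _ = N ^ (-1/(n:ℝ)) := by field_simp
  · -- the lower bound
    rintro t ⟨htpos, v, hvli, hv⟩
    -- find a point outside the real span
    have hout : ∃ i, v i ∉ Submodule.span ℝ (Set.range b) := by
      by_contra hcon
      push_neg at hcon
      set W := Submodule.span ℝ (Set.range b)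
      have hli' : LinearIndependent ℝ (fun i : Fin 3 => (⟨v i, hcon i⟩ : W)) := by
        apply LinearIndependent.of_comp W.subtype
        convert hvli using 1
        rfl
      have hcard := hli'.fintype_card_le_finrank
      have hfr : Module.finrank ℝ W = 2 := by
        rw [finrank_span_eq_card hbli]; simp
      rw [hfr] at hcard
      simp at hcard
    obtain ⟨i, hi⟩ := hout
    have hiint : IsIntPoint (v i) := (hv i).1
    have hiZ : v i ∉ Submodule.span ℤ (Set.range b) := fun h => hi (hspanRZ _ h)
    -- ρ ≤ infDist (v i) spanR
    have hbdd : BddBelow {d : ℝ | ∃ z : EuclideanSpace ℝ (Fin (n+1)), IsIntPoint z ∧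
        z ∉ Submodule.span ℤ (Set.range b) ∧
        d = Metric.infDist z (Submodule.span ℝ (Set.range b) : Set _)} := by
      refine ⟨0, ?_⟩
      rintro d ⟨z, -, -, rfl⟩
      exact Metric.infDist_nonneg
    have hρle : ρ ≤ Metric.infDist (v i) (Submodule.span ℝ (Set.range b) : Set _) := by
      rw [hρ]
      exact csInf_le hbdd ⟨v i, hiint, hiZ, rfl⟩
    -- infDist ≤ dist to the projection candidate
    set w : EuclideanSpace ℝ (Fin (n+1)) := (v i 0) • embed n ξ with hw
    have hwmem : w ∈ (Submodule.span ℝ (Set.range b) : Set _) :=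
      Submodule.smul_mem _ _ hξ
    have hdle : Metric.infDist (v i) (Submodule.span ℝ (Set.range b) : Set _)
        ≤ dist (v i) w := Metric.infDist_le_dist_of_mem hwmem
    -- compute the distance
    have hdist : dist (v i) w = Real.sqrt (∑ j, ((v i) j.succ - ξ j * (v i) 0) ^ 2) := by
      rw [EuclideanSpace.dist_eq]
      congr 1
      rw [Fin.sum_univ_succ]
      have h0 : dist ((v i) 0) (w 0) = 0 := by
        have hw0 : w 0 = v i 0 := by
          rw [hw, PiLp.smul_apply, smul_eq_mul]
          simp [embed]
        rw [hw0, dist_self]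
      rw [h0]
      have hterm : ∀ j : Fin n, dist ((v i) j.succ) (w j.succ) ^ 2
          = ((v i) j.succ - ξ j * (v i) 0) ^ 2 := by
        intro j
        have hwj : w j.succ = v i 0 * ξ j := by
          have : w j.succ = v i 0 * (embed n ξ) j.succ := rfl
          rw [this]
          simp [embed, Fin.cons_succ]
        rw [Real.dist_eq, sq_abs, hwj]
        ring_nf
      rw [Finset.sum_congr rfl (fun j _ => hterm j)]
      ring
    -- bound the distance using membership in t • cyl
    obtain ⟨z, hz, hvz⟩ := (hv i).2
    have hsq : Real.sqrt (∑ j, ((v i) j.succ - ξ j * (v i) 0) ^ 2) < t * N ^ (-1/(n:ℝ)) := by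
      rw [← hvz, key, abs_of_pos htpos]
      exact mul_lt_mul_of_pos_left hz.2 htpos
    have hfinal : ρ ≤ t * N ^ (-1/(n:ℝ)) := by
      calc ρ ≤ _ := hρle
        _ ≤ dist (v i) w := hdle
        _ = _ := hdist
        _ ≤ t * N ^ (-1/(n:ℝ)) := le_of_lt hsq
    calc N ^ ((1:ℝ)/(n:ℝ)) * ρ ≤ N ^ ((1:ℝ)/(n:ℝ)) * (t * N ^ (-1/(n:ℝ))) :=
          mul_le_mul_of_nonneg_left hfinal (le_of_lt hNpow_pos')
      _ = t * (N ^ ((1:ℝ)/(n:ℝ)) * N ^ (-1/(n:ℝ))) := by ring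
      _ = t := by rw [hpowmul, mul_one]
end
end

section
/- Let 2 ≤ l ≤ n+1 and let L ⊆ Z^{n+1} be a complete sublattice of dimension l with l-dimensional fundamental volume s, and let ξ = (1,ξ_1,...,ξ_n) ∈ span(L). Suppose the cylinder C = C_ξ(Q,σ) with σ ∈ (0,1) satisfies C ∩ L = {0}. Let Q_1 = 2^{l−1} w_{l−1}^{−1} σ^{1−l} s. Then the first successive minimum of C with respect to Z^{n+1} satisfies μ_1(C) ≤ Q_1/Q. -/
open scoped Pointwise
open MeasureTheory Filter

noncomputable section

open Submodule Module

lemma ballVol_pos (m : ℕ) : 0 < ballVol m := by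
  apply ENNReal.toReal_pos
  · exact (Metric.measure_ball_pos _ _ one_pos).ne'
  · exact (measure_ball_lt_top).ne

lemma volume_ball_eq (m : ℕ) : volume (Metric.ball (0 : EuclideanSpace ℝ (Fin m)) 1)
    = ENNReal.ofReal (ballVol m) :=
  (ENNReal.ofReal_toReal (measure_ball_lt_top).ne).symm

lemma volume_B0 (m : ℕ) (hm : 0 < m) (ρ : ℝ) (hρ : 0 < ρ) :
    volume {y : Fin m → ℝ | Real.sqrt (∑ j, (y j) ^ 2) < ρ}
      = ENNReal.ofReal (ballVol m * ρ ^ m) := by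
  haveI : Nonempty (Fin m) := ⟨⟨0, hm⟩⟩
  have e := EuclideanSpace.volume_preserving_symm_measurableEquiv_toLp (Fin m)
  have hpre : (MeasurableEquiv.toLp 2 (Fin m → ℝ)).symm ⁻¹'
      {y : Fin m → ℝ | Real.sqrt (∑ j, (y j) ^ 2) < ρ}
      = Metric.ball (0 : EuclideanSpace ℝ (Fin m)) ρ := by
    ext y
    simp only [Set.mem_preimage, Set.mem_setOf_eq, Metric.mem_ball, dist_zero_right]
    rw [EuclideanSpace.norm_eq]
    simp [Real.norm_eq_abs, sq_abs]
  have hmeas : MeasurableSet {y : Fin m → ℝ | Real.sqrt (∑ j, (y j) ^ 2) < ρ} := by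
    have : Continuous fun y : Fin m → ℝ => Real.sqrt (∑ j, (y j) ^ 2) := by
      fun_prop
    exact measurableSet_lt this.measurable measurable_const
  rw [← e.measure_preimage hmeas.nullMeasurableSet, hpre,
    Measure.addHaar_ball _ _ hρ.le, finrank_euclideanSpace_fin, volume_ball_eq,
    ← ENNReal.ofReal_mul (by positivity), mul_comm]


lemma volume_cylSet (m : ℕ) (hm : 0 < m) (ζ : Fin m → ℝ) (a ρ : ℝ) (ha : 0 < a) (hρ : 0 < ρ) :
    volume {y : EuclideanSpace ℝ (Fin (m+1)) |
        |y 0| < a ∧ Real.sqrt (∑ j, (y j.succ - ζ j * y 0) ^ 2) < ρ} =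
      ENNReal.ofReal (2*a) * ENNReal.ofReal (ballVol m * ρ^m) := by
  set U : Set (ℝ × (Fin m → ℝ)) :=
    {p | |p.1| < a ∧ Real.sqrt (∑ j, (p.2 j - ζ j * p.1) ^ 2) < ρ} with hU
  have hUmeas : MeasurableSet U := by
    have h1 : Continuous fun p : ℝ × (Fin m → ℝ) => |p.1| := by fun_prop
    have h2 : Continuous fun p : ℝ × (Fin m → ℝ) =>
        Real.sqrt (∑ j, (p.2 j - ζ j * p.1) ^ 2) := by fun_prop
    exact (measurableSet_lt h1.measurable measurable_const).inter
      (measurableSet_lt h2.measurable measurable_const)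
  -- step 1: move to pi space
  have e1 := EuclideanSpace.volume_preserving_symm_measurableEquiv_toLp (Fin (m+1))
  have e2 := measurePreserving_piFinSuccAbove (fun _ : Fin (m+1) => (volume : Measure ℝ)) 0
  have hT : volume {y : EuclideanSpace ℝ (Fin (m+1)) |
        |y 0| < a ∧ Real.sqrt (∑ j, (y j.succ - ζ j * y 0) ^ 2) < ρ}
      = (volume.prod volume) U := by
    have hcomp := (e2.comp e1).measure_preimage (μa := volume) hUmeas.nullMeasurableSet
    have hset : (⇑(MeasurableEquiv.piFinSuccAbove (fun _ : Fin (m+1) => ℝ) 0) ∘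
        ⇑(MeasurableEquiv.toLp 2 (Fin (m+1) → ℝ)).symm) ⁻¹' U
        = {y : EuclideanSpace ℝ (Fin (m+1)) |
          |y 0| < a ∧ Real.sqrt (∑ j, (y j.succ - ζ j * y 0) ^ 2) < ρ} := by
      ext y
      simp only [Set.mem_preimage, Function.comp_apply, Set.mem_setOf_eq, hU,
        MeasurableEquiv.piFinSuccAbove_apply, Fin.removeNth, Fin.succAbove_zero]
      rfl
    rw [hset] at hcomp
    rw [hcomp]
    rfl
  rw [hT]
  -- step 2: Fubini
  rw [Measure.prod_apply hUmeas]
  have hslice : ∀ t : ℝ, volume (Prod.mk t ⁻¹' U) =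
      Set.indicator (Set.Ioo (-a) a) (fun _ => ENNReal.ofReal (ballVol m * ρ^m)) t := by
    intro t
    by_cases ht : |t| < a
    · have : Prod.mk t ⁻¹' U = (fun j => ζ j * t) +ᵥ
          {y : Fin m → ℝ | Real.sqrt (∑ j, (y j) ^ 2) < ρ} := by
        ext y
        simp only [Set.mem_preimage, hU, Set.mem_setOf_eq, ht, true_and,
          Set.mem_vadd_set_iff_neg_vadd_mem, vadd_eq_add, Pi.add_apply, Pi.neg_apply]
        constructor
        · intro h; convert h using 3 with j; ring
        · intro h; convert h using 3 with j; ring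
      rw [this, measure_vadd, volume_B0 m hm ρ hρ,
        Set.indicator_of_mem (by simpa [Set.mem_Ioo, abs_lt] using ht)]
    · have : Prod.mk t ⁻¹' U = ∅ := by
        ext y; simp [hU, ht]
      rw [this, Set.indicator_of_notMem (by simpa [Set.mem_Ioo, abs_lt] using ht)]
      simp
  calc ∫⁻ t, volume (Prod.mk t ⁻¹' U)
      = ∫⁻ t, Set.indicator (Set.Ioo (-a) a)
          (fun _ => ENNReal.ofReal (ballVol m * ρ^m)) t := by
        exact lintegral_congr hslice
    _ = ENNReal.ofReal (ballVol m * ρ^m) * volume (Set.Ioo (-a) a) := by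
        rw [lintegral_indicator measurableSet_Ioo, setLIntegral_const]
    _ = ENNReal.ofReal (2*a) * ENNReal.ofReal (ballVol m * ρ^m) := by
        rw [Real.volume_Ioo, mul_comm]
        congr 1
        ring_nf

lemma volume_slab (m : ℕ) (hm : 0 < m) (g : EuclideanSpace ℝ (Fin (m+1)) →ₗ[ℝ] ℝ)
    (hg : ∀ z, |g z| ≤ ‖z‖) (η : EuclideanSpace ℝ (Fin (m+1))) (hη : g η = 1)
    (R ρ : ℝ) (hR : 0 < R) (hρ : 0 < ρ) :
    ENNReal.ofReal (2*R) * ENNReal.ofReal (ballVol m * ρ^m) ≤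
      volume {z : EuclideanSpace ℝ (Fin (m+1)) | |g z| < R ∧ ‖z - g z • η‖ < ρ} := by
  classical
  set K : Submodule ℝ (EuclideanSpace ℝ (Fin (m+1))) := LinearMap.ker g with hK
  -- dimension of the kernel
  have hrange : LinearMap.range g = ⊤ := by
    rw [LinearMap.range_eq_top]
    intro r
    exact ⟨r • η, by rw [_root_.map_smul, hη, smul_eq_mul, mul_one]⟩
  have hdimK : Module.finrank ℝ K = m := by
    have h1 := g.finrank_range_add_finrank_ker
    rw [← hK, hrange] at h1
    rw [finrank_top, Module.finrank_self, finrank_euclideanSpace_fin] at h1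
    omega
  -- unit normal vector
  obtain ⟨v, hvmem, hvne⟩ : ∃ v ∈ Kᗮ, v ≠ 0 := by
    have : Kᗮ ≠ ⊥ := by
      intro h
      have h2 := Submodule.finrank_add_finrank_orthogonal (K := K)
      rw [h, hdimK, finrank_bot, finrank_euclideanSpace_fin] at h2
      omega
    obtain ⟨v, hv, hvne⟩ := Submodule.exists_mem_ne_zero_of_ne_bot this
    exact ⟨v, hv, hvne⟩
  set u₀ : EuclideanSpace ℝ (Fin (m+1)) := ‖v‖⁻¹ • v with hu₀
  have hu₀mem : u₀ ∈ Kᗮ := Submodule.smul_mem _ _ hvmem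
  have hu₀norm : ‖u₀‖ = 1 := norm_smul_inv_norm hvne
  set c : ℝ := g u₀ with hc
  have hcne : c ≠ 0 := by
    intro h
    have hker : u₀ ∈ K := by rwa [hK, LinearMap.mem_ker]
    have : (inner ℝ u₀ u₀ : ℝ) = 0 := (Submodule.mem_orthogonal K u₀).mp hu₀mem u₀ hker
    rw [inner_self_eq_zero] at this
    rw [this, norm_zero] at hu₀norm
    norm_num at hu₀norm
  have hcabs : |c| ≤ 1 := by
    have := hg u₀
    rwa [hu₀norm] at this
  have hcabs_pos : 0 < |c| := abs_pos.mpr hcne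
  -- adapted orthonormal basis
  set pK : OrthonormalBasis (Fin m) ℝ K :=
    (stdOrthonormalBasis ℝ K).reindex (finCongr hdimK) with hpK
  set q : Fin (m+1) → EuclideanSpace ℝ (Fin (m+1)) := Fin.cons u₀ (fun j => (pK j : EuclideanSpace ℝ (Fin (m+1)))) with hq
  have hqon : Orthonormal ℝ q := by
    rw [orthonormal_iff_ite]
    intro i j
    refine Fin.cases ?_ ?_ i <;> [skip; intro i'] <;> refine Fin.cases ?_ ?_ j <;>
      try intro j'
    · simp only [hq, Fin.cons_zero, if_pos rfl]
      rw [real_inner_self_eq_norm_mul_norm, hu₀norm]; norm_num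
    · simp only [hq, Fin.cons_zero, Fin.cons_succ]
      rw [if_neg (by simp [Fin.succ_ne_zero j' |>.symm]), real_inner_comm]
      exact (Submodule.mem_orthogonal K u₀).mp hu₀mem _ (pK j').2
    · simp only [hq, Fin.cons_zero, Fin.cons_succ]
      rw [if_neg (by simp [Fin.succ_ne_zero i'])]
      exact (Submodule.mem_orthogonal K u₀).mp hu₀mem _ (pK i').2
    · simp only [hq, Fin.cons_succ]
      have := orthonormal_iff_ite.mp pK.orthonormal i' j'
      rw [← Submodule.coe_inner, this]
      simp [Fin.succ_inj]
  have hcard : Fintype.card (Fin (m+1)) = Module.finrank ℝ (EuclideanSpace ℝ (Fin (m+1))) := by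
    simp [finrank_euclideanSpace_fin]
  have hsp : ⊤ ≤ Submodule.span ℝ (Set.range q) := by
    rw [← coe_basisOfOrthonormalOfCardEqFinrank hqon hcard]
    exact (basisOfOrthonormalOfCardEqFinrank hqon hcard).span_eq.ge
  set B : OrthonormalBasis (Fin (m+1)) ℝ (EuclideanSpace ℝ (Fin (m+1))) := OrthonormalBasis.mk hqon hsp with hB
  have hBq : ⇑B = q := OrthonormalBasis.coe_mk hqon hsp
  -- g in coordinates
  have hgz : ∀ z : EuclideanSpace ℝ (Fin (m+1)), g z = c * B.repr z 0 := by
    intro z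
    conv_lhs => rw [← B.sum_repr z]
    rw [map_sum]
    simp_rw [_root_.map_smul, smul_eq_mul]
    rw [Fin.sum_univ_succ]
    have h0 : g (B 0) = c := by rw [hBq]; simp [hq, hc]
    have hs : ∀ j : Fin m, g (B j.succ) = 0 := by
      intro j
      rw [hBq]
      simp only [hq, Fin.cons_succ]
      exact (pK j).2
    rw [h0]
    simp only [hs, zero_mul, mul_zero, Finset.sum_const_zero, add_zero]
    ring
  have hη0 : c * B.repr η 0 = 1 := by rw [← hgz η, hη]
  -- the set as a preimage
  set Aset : Set (EuclideanSpace ℝ (Fin (m+1))) :=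
    {y | |y 0| < R / |c| ∧
      Real.sqrt (∑ j : Fin m, (y j.succ - (c * B.repr η j.succ) * y 0) ^ 2) < ρ} with hAset
  have hSeq : {z : EuclideanSpace ℝ (Fin (m+1)) | |g z| < R ∧ ‖z - g z • η‖ < ρ} = ⇑B.repr ⁻¹' Aset := by
    ext z
    simp only [Set.mem_setOf_eq, Set.mem_preimage, hAset]
    have h1 : |g z| < R ↔ |B.repr z 0| < R / |c| := by
      rw [hgz z, abs_mul, lt_div_iff₀ hcabs_pos, mul_comm]
    have h2 : ‖z - g z • η‖ =
        Real.sqrt (∑ j : Fin m, (B.repr z j.succ - (c * B.repr η j.succ) * B.repr z 0) ^ 2) := by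
      rw [← LinearIsometryEquiv.norm_map B.repr, map_sub, _root_.map_smul]
      rw [EuclideanSpace.norm_eq]
      congr 1
      rw [Fin.sum_univ_succ]
      have hz0 : (B.repr z - g z • B.repr η) 0 = 0 := by
        simp only [PiLp.sub_apply, PiLp.smul_apply, smul_eq_mul]
        rw [hgz z]
        have : c * B.repr z 0 * B.repr η 0 = B.repr z 0 * (c * B.repr η 0) := by ring
        rw [this, hη0, mul_one, sub_self]
      rw [hz0]
      simp only [norm_zero, ne_eq, OfNat.ofNat_ne_zero, not_false_eq_true, zero_pow, zero_add]
      congr 1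
      ext j
      simp only [PiLp.sub_apply, PiLp.smul_apply, smul_eq_mul, Real.norm_eq_abs, sq_abs]
      rw [hgz z]
      ring_nf
    rw [h1, h2]
  rw [hSeq]
  have hAmeas : MeasurableSet Aset := by
    have h1 : Continuous fun y : EuclideanSpace ℝ (Fin (m+1)) => |y 0| := by
      have : Continuous fun y : EuclideanSpace ℝ (Fin (m+1)) => y 0 :=
        (continuous_apply (0 : Fin (m+1))).comp (PiLp.continuous_ofLp 2 _)
      exact this.abs
    have h2 : Continuous fun y : EuclideanSpace ℝ (Fin (m+1)) =>
        Real.sqrt (∑ j : Fin m, (y j.succ - (c * B.repr η j.succ) * y 0) ^ 2) := by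
      apply Real.continuous_sqrt.comp
      apply continuous_finset_sum
      intro j _
      have hc1 : Continuous fun y : EuclideanSpace ℝ (Fin (m+1)) => y j.succ :=
        (continuous_apply (j.succ : Fin (m+1))).comp (PiLp.continuous_ofLp 2 _)
      have hc0 : Continuous fun y : EuclideanSpace ℝ (Fin (m+1)) => y 0 :=
        (continuous_apply (0 : Fin (m+1))).comp (PiLp.continuous_ofLp 2 _)
      fun_prop
    exact (measurableSet_lt h1.measurable measurable_const).inter
      (measurableSet_lt h2.measurable measurable_const)
  rw [B.measurePreserving_repr.measure_preimage hAmeas.nullMeasurableSet]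
  rw [volume_cylSet m hm _ (R / |c|) ρ (by positivity) hρ]
  apply mul_le_mul_left
  apply ENNReal.ofReal_le_ofReal
  have : R ≤ R / |c| := by
    rw [le_div_iff₀ hcabs_pos]
    nlinarith
  linarith

lemma volume_fd_basisFun (l : ℕ) :
    volume (ZSpan.fundamentalDomain (EuclideanSpace.basisFun (Fin l) ℝ).toBasis) = 1 := by
  have hpre : ZSpan.fundamentalDomain (EuclideanSpace.basisFun (Fin l) ℝ).toBasis
      = (MeasurableEquiv.toLp 2 (Fin l → ℝ)).symm ⁻¹' (Set.univ.pi fun _ => Set.Ico 0 1) := by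
    ext z
    rw [ZSpan.mem_fundamentalDomain]
    simp only [Set.mem_preimage, Set.mem_pi, Set.mem_univ, forall_true_left]
    constructor
    · intro h i
      have := h i
      rwa [OrthonormalBasis.coe_toBasis_repr_apply, EuclideanSpace.basisFun_repr] at this
    · intro h i
      rw [OrthonormalBasis.coe_toBasis_repr_apply, EuclideanSpace.basisFun_repr]
      exact h i
  rw [hpre, (EuclideanSpace.volume_preserving_symm_measurableEquiv_toLp (Fin l)).measure_preimage
    (MeasurableSet.univ_pi fun _ => measurableSet_Ico).nullMeasurableSet]
  rw [volume_pi, Measure.pi_pi]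
  simp [Real.volume_Ico]

lemma volume_fd {N l : ℕ} (b : Fin l → EuclideanSpace ℝ (Fin N)) (hbli : LinearIndependent ℝ b)
    (φ : (Submodule.span ℝ (Set.range b)) ≃ₗᵢ[ℝ] EuclideanSpace ℝ (Fin l)) :
    volume (ZSpan.fundamentalDomain ((Basis.span hbli).map φ.toLinearEquiv)) =
      ENNReal.ofReal (gramVol b) := by
  classical
  set Bd := (Basis.span hbli).map φ.toLinearEquiv with hBd
  set b₀ := (EuclideanSpace.basisFun (Fin l) ℝ).toBasis with hb₀
  rw [ZSpan.measure_fundamentalDomain Bd volume b₀, volume_fd_basisFun, mul_one]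
  congr 1
  -- |det| = gramVol
  set M : Matrix (Fin l) (Fin l) ℝ := b₀.toMatrix Bd with hM
  have hdet : b₀.det Bd = M.det := Basis.det_apply _ _
  have hMv : ∀ i j, M i j = Bd j i := by
    intro i j
    rw [hM, Basis.toMatrix_apply, hb₀, OrthonormalBasis.coe_toBasis_repr_apply,
      EuclideanSpace.basisFun_repr]
  have hgram : (Matrix.of fun i j => (@inner ℝ _ _ (b i) (b j))) = (M.transpose * M) := by
    ext i j
    rw [Matrix.of_apply]
    have h1 : b i = ((Basis.span hbli) i : EuclideanSpace ℝ (Fin N)) :=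
      (congrArg Subtype.val (Module.Basis.span_apply hbli i)).symm
    have h2 : b j = ((Basis.span hbli) j : EuclideanSpace ℝ (Fin N)) :=
      (congrArg Subtype.val (Module.Basis.span_apply hbli j)).symm
    rw [h1, h2, ← Submodule.coe_inner, ← LinearIsometryEquiv.inner_map_map φ]
    have h3 : φ ((Basis.span hbli) i) = Bd i := by rw [hBd, Basis.map_apply]; rfl
    have h4 : φ ((Basis.span hbli) j) = Bd j := by rw [hBd, Basis.map_apply]; rfl
    rw [h3, h4]
    rw [Matrix.mul_apply, PiLp.inner_apply]
    apply Finset.sum_congr rfl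
    intro k _
    rw [Matrix.transpose_apply, hMv k i, hMv k j]
    simp [RCLike.inner_apply, mul_comm]
  rw [gramVol, hgram, Matrix.det_mul, Matrix.det_transpose, ← pow_two, hdet,
    Real.sqrt_sq_eq_abs]

/-- the coordinate-0 functional -/
def coord0 (n : ℕ) : EuclideanSpace ℝ (Fin (n+1)) →ₗ[ℝ] ℝ where
  toFun z := z 0
  map_add' _ _ := rfl
  map_smul' _ _ := rfl

/-- the linear map `z ↦ (z_{j+1} - ξ_j z_0)_j`. -/
def shearMap (n : ℕ) (ξ : Fin n → ℝ) :
    EuclideanSpace ℝ (Fin (n+1)) →ₗ[ℝ] EuclideanSpace ℝ (Fin n) where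
  toFun z := WithLp.toLp 2 (fun j => z j.succ - ξ j * z 0)
  map_add' z w := by
    ext j
    simp only [PiLp.add_apply, PiLp.toLp_apply]
    ring
  map_smul' r z := by
    ext j
    simp only [PiLp.smul_apply, smul_eq_mul, RingHom.id_apply, PiLp.toLp_apply]
    ring

lemma sqrt_eq_norm_shear (n : ℕ) (ξ : Fin n → ℝ) (z : EuclideanSpace ℝ (Fin (n+1))) :
    Real.sqrt (∑ j, (z j.succ - ξ j * z 0) ^ 2) = ‖shearMap n ξ z‖ := by
  rw [EuclideanSpace.norm_eq]
  congr 1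
  apply Finset.sum_congr rfl
  intro j _
  rw [Real.norm_eq_abs, sq_abs]
  rfl

lemma cyl_eq_preimage (n : ℕ) (ξ : Fin n → ℝ) (Q σ : ℝ) :
    cyl n ξ Q σ = (coord0 n) ⁻¹' (Set.Ioo (-Q) Q) ∩ (shearMap n ξ) ⁻¹' (Metric.ball 0 σ) := by
  ext z
  simp only [cyl, Set.mem_setOf_eq, Set.mem_inter_iff, Set.mem_preimage, Set.mem_Ioo,
    Metric.mem_ball, dist_zero_right]
  rw [sqrt_eq_norm_shear, abs_lt]
  rfl

lemma cyl_convex (n : ℕ) (ξ : Fin n → ℝ) (Q σ : ℝ) : Convex ℝ (cyl n ξ Q σ) := by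
  rw [cyl_eq_preimage]
  exact ((convex_Ioo _ _).linear_preimage _).inter ((convex_ball _ _).linear_preimage _)

lemma cyl_neg_mem (n : ℕ) (ξ : Fin n → ℝ) (Q σ : ℝ) {z} (hz : z ∈ cyl n ξ Q σ) :
    -z ∈ cyl n ξ Q σ := by
  rw [cyl_eq_preimage] at hz ⊢
  obtain ⟨h1, h2⟩ := hz
  constructor
  · simp only [Set.mem_preimage, map_neg, Set.mem_Ioo] at h1 ⊢
    constructor <;> linarith [h1.1, h1.2]
  · simp only [Set.mem_preimage, map_neg, Metric.mem_ball, dist_zero_right, norm_neg] at h2 ⊢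
    exact h2

lemma cyl_smul (n : ℕ) (ξ : Fin n → ℝ) (Q σ t : ℝ) (ht : 0 < t) :
    t • cyl n ξ Q σ = cyl n ξ (t*Q) (t*σ) := by
  ext z
  rw [Set.mem_smul_set_iff_inv_smul_mem₀ ht.ne']
  simp only [cyl, Set.mem_setOf_eq]
  have h0 : ((t⁻¹ • z : EuclideanSpace ℝ (Fin (n+1)))) 0 = t⁻¹ * z 0 := rfl
  constructor
  · rintro ⟨h1, h2⟩
    constructor
    · rw [h0, abs_mul, abs_of_pos (inv_pos.mpr ht)] at h1
      calc |z 0| = t * (t⁻¹ * |z 0|) := by field_simp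
        _ < t * Q := by exact mul_lt_mul_of_pos_left h1 ht
    · rw [sqrt_eq_norm_shear] at h2 ⊢
      rw [_root_.map_smul, norm_smul, Real.norm_eq_abs, abs_of_pos (inv_pos.mpr ht)] at h2
      calc ‖shearMap n ξ z‖ = t * (t⁻¹ * ‖shearMap n ξ z‖) := by field_simp
        _ < t * σ := mul_lt_mul_of_pos_left h2 ht
  · rintro ⟨h1, h2⟩
    constructor
    · rw [h0, abs_mul, abs_of_pos (inv_pos.mpr ht)]
      calc t⁻¹ * |z 0| < t⁻¹ * (t * Q) := mul_lt_mul_of_pos_left h1 (inv_pos.mpr ht)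
        _ = Q := by field_simp
    · rw [sqrt_eq_norm_shear] at h2 ⊢
      rw [_root_.map_smul, norm_smul, Real.norm_eq_abs, abs_of_pos (inv_pos.mpr ht)]
      calc t⁻¹ * ‖shearMap n ξ z‖ < t⁻¹ * (t * σ) := by
            exact mul_lt_mul_of_pos_left h2 (inv_pos.mpr ht)
        _ = σ := by field_simp

lemma abs_coord_le_norm {N : ℕ} (w : EuclideanSpace ℝ (Fin N)) (i : Fin N) : |w i| ≤ ‖w‖ := by
  rw [EuclideanSpace.norm_eq, ← Real.sqrt_sq_eq_abs]
  apply Real.sqrt_le_sqrt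
  have : (w i)^2 = ‖w i‖^2 := by rw [Real.norm_eq_abs, sq_abs]
  rw [this]
  exact Finset.single_le_sum (f := fun j => ‖w j‖^2) (fun j _ => sq_nonneg _)
    (Finset.mem_univ i)

lemma minkowski_package (n m : ℕ) (hm0 : 0 < m)
    (b : Fin (m+1) → EuclideanSpace ℝ (Fin (n+1)))
    (hbli : LinearIndependent ℝ b)
    (ξ : Fin n → ℝ) (hξ : embed n ξ ∈ Submodule.span ℝ (Set.range b))
    (R ρ : ℝ) (hR : 0 < R) (hρ : 0 < ρ)
    (hvol : 2 ^ (m+1) * gramVol b < 2 * R * (ballVol m * ρ ^ m)) :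
    ∃ z ∈ Submodule.span ℤ (Set.range b), z ≠ 0 ∧ z ∈ cyl n ξ R ρ := by
  classical
  set V : Submodule ℝ (EuclideanSpace ℝ (Fin (n+1))) := Submodule.span ℝ (Set.range b) with hV
  have hfr : finrank ℝ V = m + 1 := by
    rw [hV, finrank_span_eq_card hbli, Fintype.card_fin]
  set o : OrthonormalBasis (Fin (m+1)) ℝ V :=
    (stdOrthonormalBasis ℝ V).reindex (finCongr hfr) with ho
  set φ : V ≃ₗᵢ[ℝ] EuclideanSpace ℝ (Fin (m+1)) := o.repr with hφ
  set g : EuclideanSpace ℝ (Fin (m+1)) →ₗ[ℝ] ℝ :=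
    (coord0 n).comp ((V.subtype).comp φ.symm.toLinearEquiv.toLinearMap) with hg
  have hgapp : ∀ z, g z = ((φ.symm z : V) : EuclideanSpace ℝ (Fin (n+1))) 0 := fun z => rfl
  have hgle : ∀ z, |g z| ≤ ‖z‖ := by
    intro z
    rw [hgapp]
    calc |((φ.symm z : V) : EuclideanSpace ℝ (Fin (n+1))) 0|
        ≤ ‖((φ.symm z : V) : EuclideanSpace ℝ (Fin (n+1)))‖ := abs_coord_le_norm _ _
      _ = ‖φ.symm z‖ := rfl
      _ = ‖z‖ := LinearIsometryEquiv.norm_map _ _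
  set η : EuclideanSpace ℝ (Fin (m+1)) := φ ⟨embed n ξ, hξ⟩ with hη
  have hη1 : g η = 1 := by
    rw [hgapp, hη, LinearIsometryEquiv.symm_apply_apply]
    show embed n ξ 0 = 1
    simp [embed]
  -- identification of the slab with the preimage of the cylinder
  have hScyl : ∀ z : EuclideanSpace ℝ (Fin (m+1)),
      (|g z| < R ∧ ‖z - g z • η‖ < ρ) ↔
        ((φ.symm z : V) : EuclideanSpace ℝ (Fin (n+1))) ∈ cyl n ξ R ρ := by
    intro z
    set w : EuclideanSpace ℝ (Fin (n+1)) := ((φ.symm z : V) : EuclideanSpace ℝ (Fin (n+1)))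
      with hw
    have hnorm : ‖z - g z • η‖ =
        Real.sqrt (∑ j, (w j.succ - ξ j * w 0) ^ 2) := by
      rw [← LinearIsometryEquiv.norm_map φ.symm, map_sub, _root_.map_smul, hη,
        LinearIsometryEquiv.symm_apply_apply]
      have hcoe : ((φ.symm z - g z • (⟨embed n ξ, hξ⟩ : V) : V) :
          EuclideanSpace ℝ (Fin (n+1))) = w - g z • embed n ξ := by
        push_cast
        rfl
      rw [← Submodule.norm_coe, hcoe]
      rw [EuclideanSpace.norm_eq, Fin.sum_univ_succ]
      have h0 : ‖(w - g z • embed n ξ) 0‖ = 0 := by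
        have : (w - g z • embed n ξ) 0 = w 0 - g z * 1 := by
          simp [embed, PiLp.sub_apply, PiLp.smul_apply]
        rw [this, hgapp, ← hw]
        simp
      rw [h0]
      simp only [ne_eq, OfNat.ofNat_ne_zero, not_false_eq_true, zero_pow, zero_add]
      congr 1
      apply Finset.sum_congr rfl
      intro j _
      have : (w - g z • embed n ξ) j.succ = w j.succ - g z * ξ j := by
        simp [embed, PiLp.sub_apply, PiLp.smul_apply]
      rw [Real.norm_eq_abs, sq_abs, this, hgapp, ← hw]
      ring
    rw [hnorm]
    constructor
    · rintro ⟨h1, h2⟩; exact ⟨by rwa [hgapp, ← hw] at h1, h2⟩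
    · rintro ⟨h1, h2⟩; exact ⟨by rwa [hgapp, ← hw], h2⟩
  set S : Set (EuclideanSpace ℝ (Fin (m+1))) :=
    {z | |g z| < R ∧ ‖z - g z • η‖ < ρ} with hS
  -- the lattice
  set Bd : Basis (Fin (m+1)) ℝ (EuclideanSpace ℝ (Fin (m+1))) :=
    (Basis.span hbli).map φ.toLinearEquiv with hBd
  have hfund := ZSpan.isAddFundamentalDomain' Bd volume
  haveI : Countable (span ℤ (Set.range ⇑Bd)).toAddSubgroup :=
    inferInstanceAs (Countable (span ℤ (Set.range ⇑Bd)))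
  have hsymm : ∀ x ∈ S, -x ∈ S := by
    intro x hx
    rw [hS, Set.mem_setOf_eq, hScyl] at hx ⊢
    have : ((φ.symm (-x) : V) : EuclideanSpace ℝ (Fin (n+1)))
        = -((φ.symm x : V) : EuclideanSpace ℝ (Fin (n+1))) := by
      rw [map_neg]; push_cast; rfl
    rw [this]
    exact cyl_neg_mem n ξ R ρ hx
  have hconv : Convex ℝ S := by
    have : S = ((V.subtype).comp φ.symm.toLinearEquiv.toLinearMap) ⁻¹' (cyl n ξ R ρ) := by
      ext z
      rw [hS, Set.mem_setOf_eq, hScyl]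
      rfl
    rw [this]
    exact (cyl_convex n ξ R ρ).linear_preimage _
  have hlt : volume (ZSpan.fundamentalDomain Bd) *
      2 ^ finrank ℝ (EuclideanSpace ℝ (Fin (m+1))) < volume S := by
    rw [hBd, volume_fd b hbli φ, finrank_euclideanSpace_fin]
    calc ENNReal.ofReal (gramVol b) * 2 ^ (m+1)
        = ENNReal.ofReal (2 ^ (m+1) * gramVol b) := by
          rw [mul_comm, ← ENNReal.ofReal_ofNat 2, ← ENNReal.ofReal_pow (by norm_num),
            ← ENNReal.ofReal_mul (by positivity)]
      _ < ENNReal.ofReal (2 * R * (ballVol m * ρ ^ m)) := by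
          have hgv : (0:ℝ) ≤ gramVol b := Real.sqrt_nonneg _
          exact (ENNReal.ofReal_lt_ofReal_iff_of_nonneg (by positivity)).mpr hvol
      _ = ENNReal.ofReal (2*R) * ENNReal.ofReal (ballVol m * ρ^m) := by
          rw [← ENNReal.ofReal_mul (by positivity)]
      _ ≤ volume S := volume_slab m hm0 g hgle η hη1 R ρ hR hρ
  obtain ⟨x, hxne, hxS⟩ :=
    exists_ne_zero_mem_lattice_of_measure_mul_two_pow_lt_measure hfund hsymm hconv hlt
  set z : EuclideanSpace ℝ (Fin (n+1)) :=
    ((φ.symm (x : EuclideanSpace ℝ (Fin (m+1))) : V) : EuclideanSpace ℝ (Fin (n+1))) with hz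
  have hzcyl : z ∈ cyl n ξ R ρ := (hScyl _).mp hxS
  have hzne : z ≠ 0 := by
    intro h
    apply hxne
    have h1 : (φ.symm (x : EuclideanSpace ℝ (Fin (m+1))) : V) = 0 := by
      exact Subtype.ext h
    have h2 : (x : EuclideanSpace ℝ (Fin (m+1))) = 0 := by
      have := congrArg φ h1
      rwa [LinearIsometryEquiv.apply_symm_apply, map_zero] at this
    exact_mod_cast Subtype.ext h2
  have hxmem : (x : EuclideanSpace ℝ (Fin (m+1))) ∈ span ℤ (Set.range ⇑Bd) := x.2
  set ψz : EuclideanSpace ℝ (Fin (m+1)) →ₗ[ℤ] EuclideanSpace ℝ (Fin (n+1)) :=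
    (V.subtype.restrictScalars ℤ).comp (φ.symm.toLinearEquiv.toLinearMap.restrictScalars ℤ)
    with hψz
  have hmem2 : ψz (x : EuclideanSpace ℝ (Fin (m+1))) ∈
      Submodule.map ψz (span ℤ (Set.range ⇑Bd)) := Submodule.mem_map_of_mem hxmem
  rw [Submodule.map_span, ← Set.range_comp] at hmem2
  have hcomp : (⇑ψz ∘ ⇑Bd) = b := by
    funext i
    simp only [Function.comp_apply, hψz, hBd, Basis.map_apply, LinearMap.coe_comp,
      LinearMap.coe_restrictScalars, Submodule.coe_subtype]
    show ((φ.symm (φ (Basis.span hbli i)) : V) : EuclideanSpace ℝ (Fin (n+1))) = b i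
    rw [LinearIsometryEquiv.symm_apply_apply, Basis.span_apply]
  rw [hcomp] at hmem2
  exact ⟨z, hmem2, hzne, hzcyl⟩

lemma isIntPoint_of_mem_span {N l : ℕ} {b : Fin l → EuclideanSpace ℝ (Fin N)}
    (hbint : ∀ i, IsIntPoint (b i)) {z} (hz : z ∈ span ℤ (Set.range b)) : IsIntPoint z := by
  induction hz using Submodule.span_induction with
  | mem x hx => obtain ⟨i, rfl⟩ := hx; exact hbint i
  | zero => intro j; exact ⟨0, by simp⟩
  | add x y hx hy ihx ihy =>
      intro j
      obtain ⟨a, ha⟩ := ihx j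
      obtain ⟨c, hc⟩ := ihy j
      exact ⟨a + c, by push_cast [PiLp.add_apply, ha, hc]; ring⟩
  | smul a x hx ih =>
      intro j
      obtain ⟨c, hc⟩ := ih j
      refine ⟨a * c, ?_⟩
      have : ((a • x : EuclideanSpace ℝ (Fin N))) j = (a : ℝ) * x j := by
        simp [PiLp.smul_apply]
      rw [this, hc]
      push_cast
      ring


theorem lemma1_first_minimum (n l : ℕ) (hn : 0 < n) (hl : 2 ≤ l) (hln : l ≤ n + 1)
    (b : Fin l → EuclideanSpace ℝ (Fin (n+1))) (hbint : ∀ i, IsIntPoint (b i))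
    (hbli : LinearIndependent ℝ b) (hbcomp : IsCompleteLat b)
    (ξ : Fin n → ℝ) (hξ : embed n ξ ∈ Submodule.span ℝ (Set.range b))
    (Q σ : ℝ) (hQ : 0 < Q) (hσ : σ ∈ Set.Ioo (0 : ℝ) 1)
    (hempty : ∀ z ∈ Submodule.span ℤ (Set.range b), z ∈ cyl n ξ Q σ → z = 0) :
    succMin n 1 (cyl n ξ Q σ) ≤
      (2 ^ (l - 1) * (ballVol (l - 1))⁻¹ * σ ^ (1 - (l : ℝ)) * gramVol b) / Q := by
  obtain ⟨m, rfl⟩ : ∃ m, l = m + 1 := ⟨l - 1, by omega⟩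
  have hm0 : 0 < m := by omega
  obtain ⟨hσ0, hσ1⟩ := hσ
  have hsnn : (0:ℝ) ≤ gramVol b := Real.sqrt_nonneg _
  have hw : 0 < ballVol m := ballVol_pos m
  set Q1 : ℝ := 2 ^ m * (ballVol m)⁻¹ * (σ ^ m)⁻¹ * gramVol b with hQ1def
  have hσm : (0:ℝ) < σ ^ m := by positivity
  have hQ1id : 2 * Q1 * (ballVol m * σ ^ m) = 2 ^ (m+1) * gramVol b := by
    rw [hQ1def]
    field_simp
    ring
  -- step 1 : Q ≤ Q1
  have hQQ1 : Q ≤ Q1 := by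
    by_contra hcon
    push_neg at hcon
    have hvolin : 2 ^ (m+1) * gramVol b < 2 * Q * (ballVol m * σ ^ m) := by
      rw [← hQ1id]
      have : 0 < ballVol m * σ ^ m := by positivity
      nlinarith
    obtain ⟨z, hzmem, hzne, hzcyl⟩ :=
      minkowski_package n m hm0 b hbli ξ hξ Q σ hQ hσ0 hvolin
    exact hzne (hempty z hzmem hzcyl)
  -- step 2 : every t > Q1/Q admits a nonzero integer point in t•C
  have hmain : ∀ t : ℝ, Q1 / Q < t →
      t ∈ {t : ℝ | 0 < t ∧ ∃ v : Fin 1 → EuclideanSpace ℝ (Fin (n+1)),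
        LinearIndependent ℝ v ∧ ∀ i, IsIntPoint (v i) ∧ v i ∈ t • cyl n ξ Q σ} := by
    intro t ht
    have hQ1Q : 1 ≤ Q1 / Q := by
      rw [le_div_iff₀ hQ, one_mul]; exact hQQ1
    have ht1 : 1 < t := lt_of_le_of_lt hQ1Q ht
    have ht0 : 0 < t := by linarith
    have h1 : Q1 < t * Q := by rwa [div_lt_iff₀ hQ] at ht
    have htm : 1 ≤ t ^ m := one_le_pow₀ ht1.le
    have hvolin : 2 ^ (m+1) * gramVol b < 2 * (t*Q) * (ballVol m * (t*σ) ^ m) := by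
      rw [← hQ1id]
      calc 2 * Q1 * (ballVol m * σ ^ m) < 2 * (t*Q) * (ballVol m * σ ^ m) := by
            have : 0 < ballVol m * σ ^ m := by positivity
            nlinarith
        _ ≤ 2 * (t*Q) * (ballVol m * (t*σ) ^ m) := by
            rw [mul_pow]
            have h2 : ballVol m * σ ^ m ≤ ballVol m * (t ^ m * σ ^ m) :=
              mul_le_mul_of_nonneg_left (le_mul_of_one_le_left hσm.le htm) hw.le
            have h3 : (0:ℝ) ≤ 2 * (t * Q) := by positivity
            exact mul_le_mul_of_nonneg_left h2 h3
    obtain ⟨z, hzmem, hzne, hzcyl⟩ :=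
      minkowski_package n m hm0 b hbli ξ hξ (t*Q) (t*σ) (by positivity) (by positivity) hvolin
    refine ⟨ht0, fun _ => z, ?_, fun i => ⟨isIntPoint_of_mem_span hbint hzmem, ?_⟩⟩
    · exact linearIndependent_unique_iff.mpr hzne
    · rw [cyl_smul n ξ Q σ t ht0]
      exact hzcyl
  -- conclusion
  have hfin : succMin n 1 (cyl n ξ Q σ) ≤ Q1 / Q := by
    rw [succMin]
    by_contra hcon
    push_neg at hcon
    set A := {t : ℝ | 0 < t ∧ ∃ v : Fin 1 → EuclideanSpace ℝ (Fin (n+1)),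
      LinearIndependent ℝ v ∧ ∀ i, IsIntPoint (v i) ∧ v i ∈ t • cyl n ξ Q σ} with hA
    set t0 : ℝ := (Q1 / Q + sInf A) / 2 with ht0def
    have h1 : Q1 / Q < t0 := by rw [ht0def]; linarith
    have h2 : t0 < sInf A := by rw [ht0def]; linarith
    have h3 : t0 ∈ A := hmain t0 h1
    have h4 : sInf A ≤ t0 := csInf_le ⟨0, fun x hx => hx.1.le⟩ h3
    linarith
  refine hfin.trans_eq ?_
  have hpow : σ ^ (1 - ((m + 1 : ℕ) : ℝ)) = (σ ^ m)⁻¹ := by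
    have h5 : (1 - ((m + 1 : ℕ) : ℝ)) = -(m : ℝ) := by push_cast; ring
    rw [h5, Real.rpow_neg hσ0.le, Real.rpow_natCast]
  have hm1 : m + 1 - 1 = m := by omega
  rw [hm1, hpow]
end
end
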